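/- arXiv:2309.09603 — 3 statements merged into one kernel-verified Lean document; each statement's English description precedes it below -/
import Mathlib

section
/- If G is a C_5-free graph and v is a vertex of G, then every connected component of the subgraph induced on N(v) is a star or a triangle. -/
open SimpleGraph Finset Function

noncomputable local instance {V : Type*} (G : SimpleGraph V) : DecidableRel G.Adj :=
  fun _ _ => Classical.dec _

/-- `G` contains a copy of the 5-cycle as a subgraph. -/
def HasC5Copy {V : Type*} (G : SimpleGraph V) : Prop :=
  ∃ f : Fin 5 → V, Injective f ∧ ∀ i, G.Adj (f i) (f (i + 1))

/-- `G` contains two vertex-disjoint copies of the 5-cycle. -/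
def HasTwoDisjointC5 {V : Type*} (G : SimpleGraph V) : Prop :=
  ∃ f g : Fin 5 → V, Injective f ∧ Injective g ∧
    (∀ i, G.Adj (f i) (f (i + 1))) ∧ (∀ i, G.Adj (g i) (g (i + 1))) ∧
    ∀ i j, f i ≠ g j

/-- The join of two graphs. -/
def GraphJoin {V W : Type*} (G : SimpleGraph V) (H : SimpleGraph W) : SimpleGraph (V ⊕ W) where
  Adj x y :=
    match x, y with
    | Sum.inl a, Sum.inl b => G.Adj a b
    | Sum.inr a, Sum.inr b => H.Adj a b
    | Sum.inl _, Sum.inr _ => True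
    | Sum.inr _, Sum.inl _ => True
  symm := ⟨by rintro (a|a) (b|b) h <;> simp_all <;> exact h.symm⟩
  loopless := ⟨by rintro (a|a) h; exacts [G.irrefl h, H.irrefl h]⟩

/-- `G` contains `k` pairwise vertex-disjoint copies of `K_r`. -/
def HasDisjointCliques {V : Type*} (G : SimpleGraph V) (k r : ℕ) : Prop :=
  ∃ f : Fin k → Finset V, (∀ i, G.IsNClique r (f i)) ∧
    ∀ i j, i ≠ j → Disjoint (f i) (f j)

/-- Six pairwise vertex-disjoint copies of `P₄` inside the neighborhood of `v`. -/
def SixDisjointP4InNbhd {V : Type*} (G : SimpleGraph V) (v : V) : Prop :=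
  ∃ f : Fin 6 → Fin 4 → V,
    Injective (fun p : Fin 6 × Fin 4 => f p.1 p.2) ∧
    (∀ i j, G.Adj v (f i j)) ∧
    (∀ i, G.Adj (f i 0) (f i 1) ∧ G.Adj (f i 1) (f i 2) ∧ G.Adj (f i 2) (f i 3))

/-- `u` is joined to (at least) `t` pairwise disjoint `r`-cliques inside `S`. -/
def JoinedToDisjointCliques {V : Type*} (G : SimpleGraph V) (u : V) (S : Set V) (t r : ℕ) : Prop :=
  ∃ f : Fin t → Finset V, (∀ j, ↑(f j) ⊆ S ∧ G.IsNClique r (f j) ∧ ∀ w ∈ f j, G.Adj u w) ∧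
    ∀ i j, i ≠ j → Disjoint (f i) (f j)



lemma reach_closed' {V : Type*} {H : SimpleGraph V} {S : Set V}
    (hS : ∀ ⦃x y⦄, x ∈ S → H.Adj x y → y ∈ S) {a b : V}
    (h : H.Reachable a b) (ha : a ∈ S) : b ∈ S := by
  obtain ⟨w⟩ := h
  induction w with
  | nil => exact ha
  | cons h p ih => exact ih (hS ha h)

lemma c5free_noP4 {n : ℕ} {G : SimpleGraph (Fin n)} (hG : ¬ HasC5Copy G) {v : Fin n}
    {a b c d : ↑(↑(G.neighborFinset v) : Set (Fin n))}
    (hab : (G.induce ↑(G.neighborFinset v)).Adj a b)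
    (hbc : (G.induce ↑(G.neighborFinset v)).Adj b c)
    (hcd : (G.induce ↑(G.neighborFinset v)).Adj c d)
    (hac : a ≠ c) (had : a ≠ d) (hbd : b ≠ d) : False := by
  have hab' : G.Adj ↑a ↑b := by simpa using hab
  have hbc' : G.Adj ↑b ↑c := by simpa using hbc
  have hcd' : G.Adj ↑c ↑d := by simpa using hcd
  have hva : G.Adj v ↑a := (G.mem_neighborFinset _ _).mp (Finset.mem_coe.mp a.2)
  have hvb : G.Adj v ↑b := (G.mem_neighborFinset _ _).mp (Finset.mem_coe.mp b.2)
  have hvc : G.Adj v ↑c := (G.mem_neighborFinset _ _).mp (Finset.mem_coe.mp c.2)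
  have hvd : G.Adj v ↑d := (G.mem_neighborFinset _ _).mp (Finset.mem_coe.mp d.2)
  have hac' : (a : Fin n) ≠ ↑c := Subtype.coe_injective.ne hac
  have had' : (a : Fin n) ≠ ↑d := Subtype.coe_injective.ne had
  have hbd' : (b : Fin n) ≠ ↑d := Subtype.coe_injective.ne hbd
  apply hG
  refine ⟨![v, ↑a, ↑b, ↑c, ↑d], ?_, ?_⟩
  · intro i j hij
    fin_cases i <;> fin_cases j <;>
      simp_all [Matrix.cons_val_zero, Matrix.cons_val_one, Matrix.head_cons,
        hva.ne, hvb.ne, hvc.ne, hvd.ne, hab'.ne, hbc'.ne, hcd'.ne]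
  · intro i
    fin_cases i <;>
      simp only [Matrix.cons_val_zero, Matrix.cons_val_one, Matrix.head_cons,
        Fin.isValue, Matrix.cons_val_two, Matrix.cons_val_three, Matrix.cons_val_four,
        Matrix.tail_cons] <;>
      first
        | exact hva | exact hab' | exact hbc' | exact hcd' | exact hvd.symm

/-- If `G` is `C₅`-free, every connected component of the subgraph induced on `N(v)`
is a star or a triangle. -/
theorem stmt5 (n : ℕ) (G : SimpleGraph (Fin n)) (hG : ¬ HasC5Copy G) (v : Fin n) :
    ∀ c : (G.induce ↑(G.neighborFinset v)).ConnectedComponent,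
      (∃ x ∈ c.supp, ∀ a b, (G.induce ↑(G.neighborFinset v)).Adj a b →
          a ∈ c.supp → (x = a ∨ x = b)) ∨
      (∃ s : Finset ↑(↑(G.neighborFinset v) : Set (Fin n)), ↑s = c.supp ∧ s.card = 3 ∧
          (G.induce ↑(G.neighborFinset v)).IsClique (s : Set _)) := by
  classical
  set H := G.induce (↑(G.neighborFinset v) : Set (Fin n)) with hHdef
  intro c
  have P4 : ∀ {a b x d : ↑(↑(G.neighborFinset v) : Set (Fin n))},
      H.Adj a b → H.Adj b x → H.Adj x d → a ≠ x → a ≠ d → b ≠ d → False :=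
    fun h1 h2 h3 h4 h5 h6 => c5free_noP4 hG h1 h2 h3 h4 h5 h6
  have memsupp : ∀ {x y}, H.Adj x y → x ∈ c.supp → y ∈ c.supp := by
    intro x y h hx
    rw [ConnectedComponent.mem_supp_iff] at hx ⊢
    rw [← hx]
    exact ConnectedComponent.sound h.symm.reachable
  have reachS : ∀ (S : Set ↑(↑(G.neighborFinset v) : Set (Fin n))),
      (∀ ⦃x y⦄, x ∈ S → H.Adj x y → y ∈ S) →
      ∀ {a}, a ∈ c.supp → a ∈ S → ∀ {d}, d ∈ c.supp → d ∈ S := by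
    intro S hS a ha haS d hd
    rw [ConnectedComponent.mem_supp_iff] at ha hd
    have : H.Reachable a d := ConnectedComponent.exact (ha.trans hd.symm)
    exact reach_closed' hS this haS
  by_cases htri : ∃ x y z, x ∈ c.supp ∧ H.Adj x y ∧ H.Adj y z ∧ H.Adj x z
  · -- triangle component
    right
    obtain ⟨x, y, z, hx, hxy, hyz, hxz⟩ := htri
    have hclosed : ∀ ⦃p q⦄, p ∈ ({x, y, z} : Set _) → H.Adj p q → q ∈ ({x, y, z} : Set _) := by
      intro p q hp hpq
      by_contra hq
      simp only [Set.mem_insert_iff, Set.mem_singleton_iff, not_or] at hp hq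
      obtain ⟨hqx, hqy, hqz⟩ := hq
      rcases hp with rfl | rfl | rfl
      · exact P4 hpq.symm hxy hyz hqy hqz hxz.ne
      · exact P4 hpq.symm hxy.symm hxz hqx hqz hyz.ne
      · exact P4 hpq.symm hxz.symm hxy hqx hqy (hyz.symm.ne)
    have hsupp : c.supp = {x, y, z} := by
      apply Set.eq_of_subset_of_subset
      · intro d hd
        exact reachS _ hclosed hx (by simp) hd
      · intro d hd
        simp only [Set.mem_insert_iff, Set.mem_singleton_iff] at hd
        rcases hd with rfl | rfl | rfl
        · exact hx
        · exact memsupp hxy hx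
        · exact memsupp hxz hx
    refine ⟨{x, y, z}, ?_, ?_, ?_⟩
    · rw [hsupp]; simp
    · rw [Finset.card_eq_three]
      exact ⟨x, y, z, hxy.ne, hxz.ne, hyz.ne, rfl⟩
    · intro p hp q hq hpq
      simp only [Finset.coe_insert, Finset.coe_singleton, Set.mem_insert_iff,
        Set.mem_singleton_iff] at hp hq
      rcases hp with rfl | rfl | rfl <;> rcases hq with rfl | rfl | rfl <;>
        first
          | exact absurd rfl hpq
          | assumption
          | exact hxy.symm | exact hyz.symm | exact hxz.symm
  · left
    by_cases hedge : ∃ a b, a ∈ c.supp ∧ H.Adj a b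
    · obtain ⟨a, b, ha, hab⟩ := hedge
      have hb : b ∈ c.supp := memsupp hab ha
      by_cases hby : ∃ y, y ≠ a ∧ H.Adj b y
      · -- center b
        obtain ⟨y, hya, hby'⟩ := hby
        have hNa : ∀ ⦃z⦄, H.Adj a z → z = b := by
          intro z hz
          by_contra hzb
          have hzy : z ≠ y := by
            rintro rfl
            exact htri ⟨a, b, z, ha, hab, hby', hz⟩
          exact P4 hz.symm hab hby' hzb hzy hya.symm
        have hclosed : ∀ ⦃p q⦄, p ∈ ({z | z = b ∨ H.Adj b z} : Set _) → H.Adj p q →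
            q ∈ ({z | z = b ∨ H.Adj b z} : Set _) := by
          intro p q hp hpq
          rcases hp with rfl | hbp
          · exact Or.inr hpq
          · by_contra hq
            simp only [Set.mem_setOf_eq, not_or] at hq
            obtain ⟨hqb, hqadj⟩ := hq
            by_cases hpa : p = a
            · subst hpa
              exact hqb (hNa hpq)
            · have hqa : q ≠ a := by
                rintro rfl
                exact hbp.ne' (hNa hpq.symm)
              exact P4 hpq.symm hbp.symm hab.symm hqb hqa hpa
        have hSsupp : ∀ {d}, d ∈ c.supp → d = b ∨ H.Adj b d :=
          fun {d} hd => reachS _ hclosed ha (Or.inr hab.symm) hd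
        refine ⟨b, hb, ?_⟩
        intro p q hpq hp
        rcases hSsupp hp with rfl | hbp
        · exact Or.inl rfl
        · rcases hclosed (Or.inr hbp) hpq with rfl | hbq
          · exact Or.inr rfl
          · exact absurd ⟨b, p, q, hb, hbp, hpq, hbq⟩ htri
      · -- center a
        push_neg at hby
        have hNb : ∀ ⦃z⦄, H.Adj b z → z = a := by
          intro z hz
          by_contra h
          exact hby z h hz
        have hclosed : ∀ ⦃p q⦄, p ∈ ({z | z = a ∨ H.Adj a z} : Set _) → H.Adj p q →
            q ∈ ({z | z = a ∨ H.Adj a z} : Set _) := by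
          intro p q hp hpq
          rcases hp with rfl | hap
          · exact Or.inr hpq
          · by_contra hq
            simp only [Set.mem_setOf_eq, not_or] at hq
            obtain ⟨hqa, hqadj⟩ := hq
            by_cases hpb : p = b
            · subst hpb
              exact hqa (hNb hpq)
            · have hqb : q ≠ b := by
                rintro rfl
                exact hap.ne' (hNb hpq.symm)
              exact P4 hpq.symm hap.symm hab hqa hqb hpb
        have hSsupp : ∀ {d}, d ∈ c.supp → d = a ∨ H.Adj a d :=
          fun {d} hd => reachS _ hclosed ha (Or.inl rfl) hd
        refine ⟨a, ha, ?_⟩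
        intro p q hpq hp
        rcases hSsupp hp with rfl | hap
        · exact Or.inl rfl
        · rcases hclosed (Or.inr hap) hpq with rfl | haq
          · exact Or.inr rfl
          · exact absurd ⟨a, p, q, ha, hap, hpq, haq⟩ htri
    · obtain ⟨w, hw⟩ := c.exists_rep
      refine ⟨w, ?_, ?_⟩
      · rw [ConnectedComponent.mem_supp_iff]; exact hw
      · intro p q hpq hp
        exact absurd ⟨p, q, hp, hpq⟩ hedge
end

section
/- Let G be a graph with no k+1 pairwise vertex-disjoint copies of K_r, and let X_1, ..., X_k be k pairwise vertex-disjoint r-cliques in G with N = G minus their vertex set. Then each X_i contains at most one vertex that is completely joined to at least kr+1 pairwise vertex-disjoint (r-1)-cliques in N. -/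
open SimpleGraph Finset Function

/-- If `G` is `(k+1)K_r`-free and `X₁,…,X_k` are disjoint `r`-cliques with complement `N`,
then each `X_i` has at most one vertex joined to at least `kr+1` disjoint `(r-1)`-cliques
in `N`. -/
theorem stmt12 {V : Type*} (G : SimpleGraph V) (k r : ℕ)
    (hfree : ¬ HasDisjointCliques G (k + 1) r)
    (X : Fin k → Finset V) (hX : ∀ i, G.IsNClique r (X i))
    (hdisj : ∀ i j, i ≠ j → Disjoint (X i) (X j)) :
    ∀ i : Fin k, ∀ u ∈ X i, ∀ v ∈ X i,
      JoinedToDisjointCliques G u {w | ∀ j, w ∉ X j} (k * r + 1) (r - 1) →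
      JoinedToDisjointCliques G v {w | ∀ j, w ∉ X j} (k * r + 1) (r - 1) →
      u = v := by
  classical
  intro i u hu v hv hJu hJv
  by_contra hne
  obtain ⟨f, hf, hfd⟩ := hJu
  obtain ⟨g, hg, hgd⟩ := hJv
  have hk : 0 < k := i.pos
  have hr : 0 < r := by
    have h1 := (hX i).2
    have h2 : 0 < (X i).card := Finset.card_pos.mpr ⟨u, hu⟩
    omega
  have huN : ∀ a : Fin (k*r+1), u ∉ g a ∧ u ∉ f a := by
    intro a
    exact ⟨fun h => (hg a).1 (by exact_mod_cast h) i hu,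
           fun h => (hf a).1 (by exact_mod_cast h) i hu⟩
  have hvN : ∀ a : Fin (k*r+1), v ∉ g a ∧ v ∉ f a := by
    intro a
    exact ⟨fun h => (hg a).1 (by exact_mod_cast h) i hv,
           fun h => (hf a).1 (by exact_mod_cast h) i hv⟩
  have hex : ∃ b : Fin (k*r+1), Disjoint (g b) (f 0) := by
    by_contra h
    push_neg at h
    choose w hw1 hw2 using fun b => Finset.not_disjoint_iff.mp (h b)
    have hinj : Function.Injective w := by
      intro a b hab
      by_contra hab'
      exact (hgd a b hab').forall_ne_finset (hw1 a) (hab ▸ hw1 b) rfl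
    have hcard : (Finset.univ : Finset (Fin (k*r+1))).card ≤ (f 0).card :=
      Finset.card_le_card_of_injOn w (fun a _ => hw2 a) hinj.injOn
    rw [Finset.card_univ, Fintype.card_fin, (hf 0).2.1.2] at hcard
    have : r ≤ k * r := Nat.le_mul_of_pos_left r hk
    omega
  obtain ⟨b, hb⟩ := hex
  have hAclique : G.IsNClique r (insert u (f 0)) := by
    constructor
    · rw [Finset.coe_insert]
      exact (hf 0).2.1.1.insert (fun x hx _ => (hf 0).2.2 x hx)
    · rw [Finset.card_insert_of_notMem (huN 0).2, (hf 0).2.1.2]; omega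
  have hBclique : G.IsNClique r (insert v (g b)) := by
    constructor
    · rw [Finset.coe_insert]
      exact (hg b).2.1.1.insert (fun x hx _ => (hg b).2.2 x hx)
    · rw [Finset.card_insert_of_notMem (hvN b).1, (hg b).2.1.2]; omega
  have hAX : ∀ j : Fin k, j ≠ i → Disjoint (insert u (f 0)) (X j) := by
    intro j hji
    rw [Finset.disjoint_left]
    intro x hx hxj
    rcases Finset.mem_insert.mp hx with rfl | hx'
    · exact (Finset.disjoint_left.mp (hdisj i j (Ne.symm hji)) hu) hxj
    · exact (hf 0).1 (by exact_mod_cast hx') j hxj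
  have hBX : ∀ j : Fin k, j ≠ i → Disjoint (insert v (g b)) (X j) := by
    intro j hji
    rw [Finset.disjoint_left]
    intro x hx hxj
    rcases Finset.mem_insert.mp hx with rfl | hx'
    · exact (Finset.disjoint_left.mp (hdisj i j (Ne.symm hji)) hv) hxj
    · exact (hg b).1 (by exact_mod_cast hx') j hxj
  have hAB : Disjoint (insert u (f 0)) (insert v (g b)) := by
    rw [Finset.disjoint_left]
    intro x hx hxB
    rcases Finset.mem_insert.mp hx with rfl | hx'
    · rcases Finset.mem_insert.mp hxB with rfl | hx''
      · exact hne rfl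
      · exact (huN b).1 hx''
    · rcases Finset.mem_insert.mp hxB with rfl | hx''
      · exact (hvN 0).2 hx'
      · exact Finset.disjoint_right.mp hb hx' hx''
  apply hfree
  refine ⟨fun m => if h : (m : ℕ) < k then
      (if (⟨m, h⟩ : Fin k) = i then insert u (f 0) else X ⟨m, h⟩)
    else insert v (g b), ?_, ?_⟩
  · intro m
    dsimp only
    split_ifs with h1 h2
    · exact hAclique
    · exact hX _
    · exact hBclique
  · intro m1 m2 hm
    dsimp only
    by_cases h1 : (m1:ℕ) < k
    · rw [dif_pos h1]
      by_cases h2 : (m2:ℕ) < k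
      · rw [dif_pos h2]
        by_cases e1 : (⟨(m1:ℕ), h1⟩ : Fin k) = i
        · rw [if_pos e1]
          by_cases e2 : (⟨(m2:ℕ), h2⟩ : Fin k) = i
          · exact absurd (Fin.ext (show (m1:ℕ) = (m2:ℕ) by
              have a1 := congrArg Fin.val e1
              have a2 := congrArg Fin.val e2
              simp only [] at a1 a2
              omega)) hm
          · rw [if_neg e2]; exact hAX _ e2
        · rw [if_neg e1]
          by_cases e2 : (⟨(m2:ℕ), h2⟩ : Fin k) = i
          · rw [if_pos e2]; exact (hAX _ e1).symm
          · rw [if_neg e2]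
            refine hdisj _ _ (fun h => hm (Fin.ext ?_))
            have := congrArg Fin.val h
            simpa using this
      · rw [dif_neg h2]
        by_cases e1 : (⟨(m1:ℕ), h1⟩ : Fin k) = i
        · rw [if_pos e1]; exact hAB
        · rw [if_neg e1]; exact (hBX _ e1).symm
    · rw [dif_neg h1]
      by_cases h2 : (m2:ℕ) < k
      · rw [dif_pos h2]
        by_cases e2 : (⟨(m2:ℕ), h2⟩ : Fin k) = i
        · rw [if_pos e2]; exact hAB.symm
        · rw [if_neg e2]; exact hBX _ e2
      · exact absurd (Fin.ext (by omega : (m1:ℕ) = (m2:ℕ))) hm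
end

section
/- Let G be a graph with no k+1 pairwise vertex-disjoint copies of K_r, and suppose u_1, ..., u_k are distinct vertices such that each u_i is joined to at least kr+1 pairwise vertex-disjoint (r-1)-cliques in G − {u_1,...,u_k}. Then G − {u_1,...,u_k} is K_r-free. -/
open SimpleGraph Finset Function

lemma exists_disjoint_aux {V : Type*} [DecidableEq V] {t : ℕ} (f : Fin t → Finset V)
    (hdisj : ∀ i j, i ≠ j → Disjoint (f i) (f j)) (F : Finset V) (hF : F.card < t) :
    ∃ j, Disjoint (f j) F := by
  by_contra h
  push_neg at h
  have hch : ∀ j : Fin t, ∃ v, v ∈ f j ∧ v ∈ F := by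
    intro j
    exact Finset.not_disjoint_iff.mp (h j)
  choose φ hφ1 hφ2 using hch
  have hinj : Function.Injective φ := by
    intro i j hij
    by_contra hne
    exact Finset.disjoint_left.mp (hdisj i j hne) (hφ1 i) (hij ▸ hφ1 j)
  have := Finset.card_le_card_of_injOn (s := Finset.univ) (t := F) φ (fun j _ => hφ2 j)
    hinj.injOn
  simp [Finset.card_univ] at this
  omega

lemma select_aux {V : Type*} [DecidableEq V] (G : SimpleGraph V) (k r : ℕ) (u : Fin k → V)
    (hjoin : ∀ i, JoinedToDisjointCliques G (u i) {w | ∀ j, w ≠ u j} (k * r + 1) (r - 1))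
    (Q : Finset V) (hQcard : Q.card = r) (hr : 1 ≤ r) :
    ∀ m (hm : m ≤ k), ∃ S : Fin m → Finset V,
      (∀ i, ↑(S i) ⊆ {w : V | ∀ j, w ≠ u j} ∧ G.IsNClique (r - 1) (S i) ∧
        ∀ w ∈ S i, G.Adj (u (Fin.castLE hm i)) w) ∧
      (∀ i j, i ≠ j → Disjoint (S i) (S j)) ∧
      (∀ i, Disjoint (S i) Q) := by
  intro m
  induction m with
  | zero => exact fun _ => ⟨Fin.elim0, fun i => i.elim0, fun i => i.elim0, fun i => i.elim0⟩
  | succ m ih =>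
    intro hm
    obtain ⟨S, hS1, hS2, hS3⟩ := ih (Nat.le_of_succ_le hm)
    -- forbidden set
    set B : Finset V := Finset.univ.biUnion (fun i : Fin m => S i) with hB
    have hBcard : B.card ≤ m * (r - 1) := by
      rw [hB, Finset.card_biUnion (fun i _ j _ hij => hS2 i j hij)]
      have hc : ∀ i ∈ (Finset.univ : Finset (Fin m)), (S i).card = r - 1 :=
        fun i _ => (hS1 i).2.1.2
      rw [Finset.sum_congr rfl hc, Finset.sum_const, Finset.card_univ, Fintype.card_fin,
        smul_eq_mul]
    set F : Finset V := Q ∪ B with hF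
    have hFcard : F.card < k * r + 1 := by
      have h1 : F.card ≤ r + m * (r - 1) := by
        calc F.card ≤ Q.card + B.card := Finset.card_union_le _ _
          _ ≤ r + m * (r - 1) := Nat.add_le_add hQcard.le hBcard
      have h2 : m * (r - 1) ≤ (k - 1) * (r - 1) :=
        Nat.mul_le_mul_right _ (by omega)
      obtain ⟨k', rfl⟩ : ∃ k', k = k' + 1 := ⟨k - 1, by omega⟩
      obtain ⟨r', rfl⟩ : ∃ r', r = r' + 1 := ⟨r - 1, by omega⟩
      simp only [Nat.add_sub_cancel] at h1 h2
      have : (k' + 1) * (r' + 1) = k' * r' + k' + r' + 1 := by ring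
      have h2' : m * r' ≤ k' * r' := h2
      omega
    obtain ⟨f, hf, hfd⟩ := hjoin (Fin.castLE hm (Fin.last m))
    obtain ⟨j, hj⟩ := exists_disjoint_aux f hfd F hFcard
    refine ⟨Fin.snoc S (f j), ?_, ?_, ?_⟩
    · intro i
      refine Fin.lastCases ?_ ?_ i
      · simpa using ⟨(hf j).1, (hf j).2.1, (hf j).2.2⟩
      · intro i'
        have := hS1 i'
        simp only [Fin.snoc_castSucc]
        refine ⟨this.1, this.2.1, ?_⟩
        have : Fin.castLE hm (Fin.castSucc i') = Fin.castLE (Nat.le_of_succ_le hm) i' :=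
          Fin.ext rfl
        rw [this]
        exact (hS1 i').2.2
    · intro i i2
      have key : ∀ i' : Fin m, Disjoint (f j) (S i') := by
        intro i'
        refine hj.mono_right ?_
        refine Finset.Subset.trans ?_ Finset.subset_union_right
        exact Finset.subset_biUnion_of_mem _ (Finset.mem_univ i')
      refine Fin.lastCases ?_ ?_ i <;>
        [skip; intro i'] <;> refine Fin.lastCases ?_ ?_ i2
      · intro hii
        exact absurd rfl hii
      · intro i2' _
        simp only [Fin.snoc_last, Fin.snoc_castSucc]
        exact key i2'
      · intro _
        simp only [Fin.snoc_last, Fin.snoc_castSucc]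
        exact (key i').symm
      · intro i2' hii
        simp only [Fin.snoc_castSucc]
        exact hS2 i' i2' (fun h => hii (congrArg Fin.castSucc h))
    · intro i
      refine Fin.lastCases ?_ ?_ i
      · simpa using hj.mono_right Finset.subset_union_left
      · intro i'
        simpa using hS3 i'

/-- If `G` is `(k+1)K_r`-free and `u₁,…,u_k` are distinct vertices each joined to at least
`kr+1` pairwise disjoint `(r-1)`-cliques in `G − {u₁,…,u_k}`, then `G − {u₁,…,u_k}` is
`K_r`-free. -/
theorem stmt13 {V : Type*} (G : SimpleGraph V) (k r : ℕ)
    (hfree : ¬ HasDisjointCliques G (k + 1) r)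
    (u : Fin k → V) (hinj : Injective u)
    (hjoin : ∀ i, JoinedToDisjointCliques G (u i) {w | ∀ j, w ≠ u j} (k * r + 1) (r - 1)) :
    (G.induce {w | ∀ j, w ≠ u j}).CliqueFree r := by
  classical
  rcases Nat.eq_zero_or_pos r with rfl | hr
  · exact absurd ⟨fun _ => (∅ : Finset V), fun i => by simp,
      fun i j _ => Finset.disjoint_empty_left _⟩ hfree
  by_contra hcf
  rw [SimpleGraph.CliqueFree] at hcf
  push_neg at hcf
  obtain ⟨t, ht⟩ := hcf
  have hQsub : ∀ v ∈ t.image Subtype.val, v ∈ {w : V | ∀ j, w ≠ u j} := by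
    intro v hv
    obtain ⟨⟨w, hw⟩, _, rfl⟩ := Finset.mem_image.mp hv
    exact hw
  have hQcard : (t.image Subtype.val).card = r := by
    rw [Finset.card_image_of_injective _ Subtype.val_injective]
    exact ht.2
  have hQclique : G.IsNClique r (t.image Subtype.val) := by
    refine ⟨?_, hQcard⟩
    intro a ha b hb hab
    obtain ⟨a', ha', rfl⟩ := Finset.mem_image.mp (Finset.mem_coe.mp ha)
    obtain ⟨b', hb', rfl⟩ := Finset.mem_image.mp (Finset.mem_coe.mp hb)
    have hne : a' ≠ b' := fun h => hab (h ▸ rfl)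
    exact ht.1 (Finset.mem_coe.mpr ha') (Finset.mem_coe.mpr hb') hne
  set Q : Finset V := t.image Subtype.val with hQ
  obtain ⟨S, hS1, hS2, hS3⟩ := select_aux G k r u hjoin Q hQcard hr k le_rfl
  have hScast : ∀ i : Fin k, Fin.castLE le_rfl i = i := fun i => Fin.ext rfl
  have huS : ∀ i i' : Fin k, u i ∉ S i' := by
    intro i i' h
    exact (hS1 i').1 h i rfl
  have huQ : ∀ i : Fin k, u i ∉ Q := by
    intro i h
    exact hQsub _ h i rfl
  refine hfree ⟨Fin.cases Q (fun i => insert (u i) (S i)), ?_, ?_⟩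
  · intro i
    refine Fin.cases ?_ ?_ i
    · simpa using hQclique
    · intro i'
      simp only [Fin.cases_succ]
      have hnotmem : u i' ∉ S i' := huS i' i'
      have hadj : ∀ w ∈ S i', G.Adj (u i') w := by
        have := (hS1 i').2.2
        rwa [hScast i'] at this
      constructor
      · rw [Finset.coe_insert]
        exact (hS1 i').2.1.1.insert fun b hb _ => hadj b (Finset.mem_coe.mp hb)
      · rw [Finset.card_insert_of_notMem hnotmem, (hS1 i').2.1.2]
        omega
  · intro i j
    refine Fin.cases ?_ ?_ i <;> [skip; intro i'] <;> refine Fin.cases ?_ ?_ j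
    · intro hij
      exact absurd rfl hij
    · intro j' _
      simp only [Fin.cases_zero, Fin.cases_succ]
      rw [Finset.disjoint_insert_right]
      exact ⟨huQ j', (hS3 j').symm⟩
    · intro _
      simp only [Fin.cases_zero, Fin.cases_succ]
      rw [Finset.disjoint_insert_left]
      exact ⟨huQ i', hS3 i'⟩
    · intro j' hij
      simp only [Fin.cases_succ]
      have hij' : i' ≠ j' := fun h => hij (congrArg Fin.succ h)
      rw [Finset.disjoint_insert_left, Finset.disjoint_insert_right]
      refine ⟨?_, huS j' i', hS2 i' j' hij'⟩
      simp only [Finset.mem_insert, not_or]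
      exact ⟨fun h => hij' (hinj h), huS i' j'⟩
end
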